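/- Let p ≡ 3 (mod 4) and let K = Q(√p,√q) be a real biquadratic field of integral basis type (1) or (3). Then the binary quadratic form Q(x,y) = 2x² + 2√p·xy + ((p+1)/2)y², of determinant 1, is additively indecomposable over O_K. -/

import Mathlib

open NumberField

variable {K : Type*}

/-- An algebraic integer is totally positive if it is positive under every real embedding. -/
def TPos [Field K] [NumberField K] (x : 𝓞 K) : Prop :=
  ∀ φ : K →+* ℝ, 0 < φ (algebraMap (𝓞 K) K x)

/-- Totally positive or zero. -/
def TNonneg [Field K] [NumberField K] (x : 𝓞 K) : Prop :=
  TPos x ∨ x = 0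

/-- An indecomposable totally positive algebraic integer. -/
def IndecElem [Field K] [NumberField K] (x : 𝓞 K) : Prop :=
  TPos x ∧ ¬ ∃ y z : 𝓞 K, TPos y ∧ TPos z ∧ x = y + z

/-- The binary quadratic form a x² + b x y + c y² is totally positive semi-definite. -/
def BinSemiDef [Field K] [NumberField K] (a b c : 𝓞 K) : Prop :=
  ∀ x y : 𝓞 K, TNonneg (a * x ^ 2 + b * x * y + c * y ^ 2)

/-- The binary quadratic form a x² + b x y + c y² is totally positive definite. -/
def BinPosDef [Field K] [NumberField K] (a b c : 𝓞 K) : Prop :=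
  BinSemiDef a b c ∧
    ∀ x y : 𝓞 K, a * x ^ 2 + b * x * y + c * y ^ 2 = 0 → x = 0 ∧ y = 0

/-- Additive indecomposability: the form is not a sum of two nonzero totally positive
semi-definite binary quadratic forms. -/
def BinIndec [Field K] [NumberField K] (a b c : 𝓞 K) : Prop :=
  ¬ ∃ a₁ b₁ c₁ a₂ b₂ c₂ : 𝓞 K,
      BinSemiDef a₁ b₁ c₁ ∧ BinSemiDef a₂ b₂ c₂ ∧
      ¬(a₁ = 0 ∧ b₁ = 0 ∧ c₁ = 0) ∧ ¬(a₂ = 0 ∧ b₂ = 0 ∧ c₂ = 0) ∧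
      a = a₁ + a₂ ∧ b = b₁ + b₂ ∧ c = c₁ + c₂

/-- Additive indecomposability into classical forms (off-diagonal coefficients even). -/
def BinIndecCl [Field K] [NumberField K] (a b c : 𝓞 K) : Prop :=
  ¬ ∃ a₁ b₁ c₁ a₂ b₂ c₂ : 𝓞 K,
      2 ∣ b₁ ∧ 2 ∣ b₂ ∧
      BinSemiDef a₁ b₁ c₁ ∧ BinSemiDef a₂ b₂ c₂ ∧
      ¬(a₁ = 0 ∧ b₁ = 0 ∧ c₁ = 0) ∧ ¬(a₂ = 0 ∧ b₂ = 0 ∧ c₂ = 0) ∧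
      a = a₁ + a₂ ∧ b = b₁ + b₂ ∧ c = c₁ + c₂

/-! `K` is generated by square roots of natural numbers, so it is totally real, and an algebraic
integer all of whose conjugates lie in `(-1, 1)` is `0`, its norm being an integer of absolute
value `< 1`. Write a decomposition as `Q = (A₁, 2β₁, C₁) + (A₂, 2β₂, C₂)`; semi-definiteness
gives `0 ≤ Aᵢ`, `0 ≤ Cᵢ` and `βᵢ² ≤ AᵢCᵢ` at every real embedding. As `A₁ + A₂ = 2`, the
product `A₁A₂` is totally in `[0, 1]`, hence is `0` or `1`.
If `A₁ = 0`, then `β₁ = 0`, so `p = β₂² ≤ 2C₂` and `C₁ = (p + 1)/2 - C₂ ≤ 1/2` totally,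
whence `C₁ = 0`. If `A₁ = A₂ = 1`, then
`2((C₁ - β₁²) + (C₂ - β₂²)) + (β₁ - β₂)² = 2c - (β₁ + β₂)² = 1` forces `Cᵢ = βᵢ²` and
`(β₁ - β₂)² = 1`, so `4β₁β₂ = p - 1`, which is impossible in `𝓞 K` when `p ≡ 3 (mod 4)`. -/

lemma Complex.conj_eq_self_of_sq_eq_natCast {z : ℂ} {n : ℕ} (h : z ^ 2 = n) :
    starRingEnd ℂ z = z := by
  have hsq : z ^ 2 = ((√n : ℝ) : ℂ) ^ 2 := by
    rw [h, ← Complex.ofReal_pow, Real.sq_sqrt n.cast_nonneg, Complex.ofReal_natCast]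
  rcases sq_eq_sq_iff_eq_or_eq_neg.mp hsq with rfl | rfl <;> simp

lemma discrim_le_zero_of_forall_int {A B C : ℝ}
    (h : ∀ m n : ℤ, 0 ≤ A * m ^ 2 + B * m * n + C * n ^ 2) : discrim A B C ≤ 0 := by
  have hrat (r : ℚ) : 0 ≤ A * (r * r) + B * r + C := by
    have hden : (0 : ℝ) < r.den := by exact_mod_cast r.pos
    have hr : A * (r * r) + B * r + C
        = (A * r.num ^ 2 + B * r.num * r.den + C * r.den ^ 2) / r.den ^ 2 := by
      rw [Rat.cast_def]
      field_simp
    rw [hr]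
    exact div_nonneg (by exact_mod_cast h r.num r.den) (by positivity)
  refine discrim_le_zero fun x => ?_
  exact Rat.denseRange_cast.induction_on x (isClosed_le continuous_const (by fun_prop)) hrat

namespace NumberField

section

variable [Field K]

lemma isTotallyReal_of_adjoin_eq_top [CharZero K] {S : Set K} (hS : ∀ s ∈ S, ∃ n : ℕ, s ^ 2 = n)
    (hgen : Algebra.adjoin ℚ S = ⊤) : IsTotallyReal K := by
  refine ⟨fun v => ?_⟩
  rw [← v.mk_embedding, InfinitePlace.isReal_mk_iff, ComplexEmbedding.isReal_iff]
  have h := AlgHom.ext_of_adjoin_eq_top hgen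
    (φ₁ := (ComplexEmbedding.conjugate v.embedding).toRatAlgHom)
    (φ₂ := v.embedding.toRatAlgHom) fun s hs => by
      obtain ⟨n, hn⟩ := hS s hs
      exact Complex.conj_eq_self_of_sq_eq_natCast (by rw [← map_pow, hn, map_natCast])
  exact congrArg AlgHom.toRingHom h

lemma RingOfIntegers.intCast_dvd_intCast [NumberField K] {m n : ℤ}
    (h : (m : 𝓞 K) ∣ (n : 𝓞 K)) : m ∣ n := by
  obtain ⟨x, hx⟩ := h
  rcases eq_or_ne m 0 with rfl | hm
  · simp_all
  have hq : algebraMap ℚ K (n / m) = x := by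
    have hxK := congrArg (algebraMap (𝓞 K) K) hx
    rw [map_intCast, map_mul, map_intCast] at hxK
    rw [map_div₀, map_intCast, map_intCast, hxK]
    field_simp
  have hint : IsIntegral ℤ ((n / m : ℚ)) := by
    rw [← isIntegral_algebraMap_iff (algebraMap ℚ K).injective, hq]
    exact x.isIntegral_coe
  obtain ⟨k, hk⟩ := IsIntegrallyClosed.isIntegral_iff.mp hint
  rw [eq_intCast] at hk
  have hnk : (n : ℚ) = m * k := by
    rw [hk]
    field_simp
  exact ⟨k, by exact_mod_cast hnk⟩

variable [NumberField K] [IsTotallyReal K]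

lemma RingOfIntegers.eq_zero_of_forall_abs_lt_one {x : 𝓞 K} (h : ∀ φ : K →+* ℝ, |φ x| < 1) :
    x = 0 := by
  by_contra hx
  obtain ⟨σ, hσ⟩ := exists_conjugate_one_le_norm hx
  have hσ_real := IsTotallyReal.complexEmbedding_isReal σ
  rw [← hσ_real.coe_embedding_apply, Complex.norm_real, Real.norm_eq_abs] at hσ
  exact (h hσ_real.embedding).not_ge hσ

lemma RingOfIntegers.eq_zero_or_eq_one_of_forall_mem_Icc {x : 𝓞 K}
    (h : ∀ φ : K →+* ℝ, φ x ∈ Set.Icc 0 1) : x = 0 ∨ x = 1 := by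
  have hx : x * (1 - x) = 0 := eq_zero_of_forall_abs_lt_one fun φ => by
    obtain ⟨h0, h1⟩ := h φ
    simp only [map_mul, map_sub, map_one, abs_lt]
    constructor <;> nlinarith
  rcases mul_eq_zero.mp hx with hx | hx
  · exact .inl hx
  · exact .inr (sub_eq_zero.mp hx).symm

end

end NumberField

open NumberField.RingOfIntegers

namespace BinSemiDef

variable [Field K] [NumberField K] {a b c β : 𝓞 K}

lemma forall_int_nonneg (h : BinSemiDef a b c) (φ : K →+* ℝ) (m n : ℤ) :
    0 ≤ φ a * m ^ 2 + φ b * m * n + φ c * n ^ 2 := by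
  have hφ : 0 ≤ φ (algebraMap (𝓞 K) K (a * m ^ 2 + b * m * n + c * n ^ 2)) := by
    rcases h m n with hpos | hzero
    · exact (hpos φ).le
    · simp [hzero]
  simpa using hφ

lemma nonneg_left (h : BinSemiDef a b c) (φ : K →+* ℝ) : 0 ≤ φ a := by
  simpa using h.forall_int_nonneg φ 1 0

lemma nonneg_right (h : BinSemiDef a b c) (φ : K →+* ℝ) : 0 ≤ φ c := by
  simpa using h.forall_int_nonneg φ 0 1

lemma sq_le_mul (h : BinSemiDef a (2 * β) c) (φ : K →+* ℝ) : φ β ^ 2 ≤ φ a * φ c := by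
  have hd := discrim_le_zero_of_forall_int (h.forall_int_nonneg φ)
  simp only [discrim, map_mul, map_ofNat] at hd
  linarith

end BinSemiDef

section

variable [Field K] [NumberField K] [IsTotallyReal K] {p : ℕ} {s β₁ β₂ C₁ C₂ : 𝓞 K}

lemma BinSemiDef.summand_eq_zero_of_first_coeff_eq_zero (hs : s ^ 2 = p)
    (h₁ : BinSemiDef 0 (2 * β₁) C₁) (h₂ : BinSemiDef 2 (2 * β₂) C₂) (hβ : β₁ + β₂ = s)
    (hC : 2 * (C₁ + C₂) = p + 1) : β₁ = 0 ∧ C₁ = 0 := by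
  have hβ₁ : β₁ = 0 := eq_zero_of_forall_abs_lt_one fun φ => by
    have h := h₁.sq_le_mul φ
    simp only [map_zero, zero_mul] at h
    simp [pow_eq_zero_iff two_ne_zero |>.mp (le_antisymm h (sq_nonneg _))]
  refine ⟨hβ₁, eq_zero_of_forall_abs_lt_one fun φ => ?_⟩
  rw [hβ₁, zero_add] at hβ
  subst hβ
  have hsφ : φ β₂ ^ 2 = p := by simpa using congrArg (φ ∘ algebraMap (𝓞 K) K) hs
  have hCφ := congrArg (φ ∘ algebraMap (𝓞 K) K) hC
  have h₂φ := h₂.sq_le_mul φ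
  simp only [Function.comp_apply, map_mul, map_add, map_ofNat, map_natCast, map_one] at hCφ h₂φ
  rw [abs_lt]
  constructor <;> linarith [h₁.nonneg_right φ]

lemma BinSemiDef.false_of_first_coeffs_eq_one (hp : p % 4 = 3) (hs : s ^ 2 = p)
    (h₁ : BinSemiDef 1 (2 * β₁) C₁) (h₂ : BinSemiDef 1 (2 * β₂) C₂) (hβ : β₁ + β₂ = s)
    (hC : 2 * (C₁ + C₂) = p + 1) : False := by
  subst hβ
  have hsum : 2 * ((C₁ - β₁ ^ 2) + (C₂ - β₂ ^ 2)) + (β₁ - β₂) ^ 2 = 1 := by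
    linear_combination hC - hs
  have hbounds (φ : K →+* ℝ) : 0 ≤ φ ((C₁ - β₁ ^ 2 : 𝓞 K) : K) ∧
      0 ≤ φ ((C₂ - β₂ ^ 2 : 𝓞 K) : K) ∧
      2 * (φ ((C₁ - β₁ ^ 2 : 𝓞 K) : K) + φ ((C₂ - β₂ ^ 2 : 𝓞 K) : K)) ≤ 1 := by
    have h₁φ := h₁.sq_le_mul φ
    have h₂φ := h₂.sq_le_mul φ
    have hsumφ := congrArg (φ ∘ algebraMap (𝓞 K) K) hsum
    simp only [Function.comp_apply, map_add, map_sub, map_mul, map_pow, map_one, map_ofNat]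
      at h₁φ h₂φ hsumφ ⊢
    refine ⟨by linarith, by linarith, by nlinarith⟩
  have hδ₁ : C₁ - β₁ ^ 2 = 0 := eq_zero_of_forall_abs_lt_one fun φ => by
    obtain ⟨h₁φ, h₂φ, hsumφ⟩ := hbounds φ
    rw [abs_lt]; constructor <;> linarith
  have hδ₂ : C₂ - β₂ ^ 2 = 0 := eq_zero_of_forall_abs_lt_one fun φ => by
    obtain ⟨h₁φ, h₂φ, hsumφ⟩ := hbounds φ
    rw [abs_lt]; constructor <;> linarith
  have hdvd : (4 : ℤ) ∣ (p - 1 : ℤ) := intCast_dvd_intCast (K := K) ⟨β₁ * β₂, by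
    push_cast
    linear_combination hsum - hs - 2 * hδ₁ - 2 * hδ₂⟩
  omega

end

lemma binIndecCl_two_of_sq_eq_natCast [Field K] [NumberField K] [IsTotallyReal K] {p : ℕ}
    (hp : p % 4 = 3) {s c : 𝓞 K} (hs : s ^ 2 = p) (hc : 2 * c = p + 1) :
    BinIndecCl 2 (2 * s) c := by
  rintro ⟨A₁, _, C₁, A₂, _, C₂, ⟨β₁, rfl⟩, ⟨β₂, rfl⟩, h₁, h₂, hne₁, hne₂, hA, hB, hC⟩
  have hβ : β₁ + β₂ = s := mul_left_cancel₀ two_ne_zero (by linear_combination -hB)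
  have hC' : 2 * (C₁ + C₂) = p + 1 := hC ▸ hc
  have hA_mem (φ : K →+* ℝ) : φ ((A₁ * A₂ : 𝓞 K) : K) ∈ Set.Icc 0 1 := by
    have hAφ := congrArg (φ ∘ algebraMap (𝓞 K) K) hA
    simp only [Function.comp_apply, map_add, map_ofNat] at hAφ
    simp only [map_mul]
    exact ⟨mul_nonneg (h₁.nonneg_left φ) (h₂.nonneg_left φ),
      by nlinarith [sq_nonneg (φ A₁ - φ A₂)]⟩
  rcases eq_zero_or_eq_one_of_forall_mem_Icc hA_mem with hA₀ | hA₁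
  · rcases mul_eq_zero.mp hA₀ with rfl | rfl
    · rw [zero_add] at hA
      subst hA
      obtain ⟨rfl, rfl⟩ := h₁.summand_eq_zero_of_first_coeff_eq_zero hs h₂ hβ hC'
      exact hne₁ ⟨rfl, mul_zero 2, rfl⟩
    · rw [add_zero] at hA
      subst hA
      obtain ⟨rfl, rfl⟩ := h₂.summand_eq_zero_of_first_coeff_eq_zero hs h₁
        (by rw [add_comm, hβ]) (by rw [add_comm, hC'])
      exact hne₂ ⟨rfl, mul_zero 2, rfl⟩
  · have hA₁' : A₁ = 1 := by
      have hsq : (A₁ - 1) ^ 2 = 0 := by linear_combination -A₁ * hA - hA₁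
      linear_combination pow_eq_zero_iff two_ne_zero |>.mp hsq
    have hA₂' : A₂ = 1 := by linear_combination -hA - hA₁'
    subst hA₁' hA₂'
    exact h₁.false_of_first_coeffs_eq_one hp hs h₂ hβ hC'

theorem stmt7_general [Field K] [NumberField K]
    (p q : ℕ) (hp3 : p % 4 = 3)
    (sp sq : K) (hsp : sp ^ 2 = (p : K)) (hsq : sq ^ 2 = (q : K))
    (hgen : Algebra.adjoin ℚ {sp, sq} = ⊤)
    (a b c : 𝓞 K)
    (hac : algebraMap (𝓞 K) K a = 2)
    (hbc : algebraMap (𝓞 K) K b = 2 * sp)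
    (hcc : algebraMap (𝓞 K) K c = ((p : K) + 1) / 2) :
    BinIndecCl a b c := by
  have : IsTotallyReal K := isTotallyReal_of_adjoin_eq_top
    (by rintro s (rfl | rfl); exacts [⟨p, hsp⟩, ⟨q, hsq⟩]) hgen
  let s : 𝓞 K := ⟨sp, IsIntegral.of_pow two_pos (hsp ▸ isIntegral_natCast p)⟩
  have hinj := FaithfulSMul.algebraMap_injective (𝓞 K) K
  have ha : a = 2 := hinj (by rw [hac, map_ofNat])
  have hb : b = 2 * s := hinj (by rw [hbc, map_mul, map_ofNat]; rfl)
  have hs : s ^ 2 = p := hinj (by rw [map_pow, map_natCast]; exact hsp)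
  have hc : 2 * c = p + 1 := hinj (by
    rw [map_mul, map_add, map_ofNat, map_natCast, map_one, hcc]
    field_simp)
  subst ha hb
  exact binIndecCl_two_of_sq_eq_natCast hp3 hs hc

theorem stmt7 [Field K] [NumberField K]
    (p q : ℕ) (hp : 1 < p) (hq : 1 < q) (hpq : p ≠ q)
    (hps : Squarefree p) (hqs : Squarefree q)
    (hp3 : p % 4 = 3) (hq12 : q % 4 = 1 ∨ q % 4 = 2)
    (sp sq : K) (hsp : sp ^ 2 = (p : K)) (hsq : sq ^ 2 = (q : K))
    (hgen : Algebra.adjoin ℚ {sp, sq} = ⊤)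
    (a b c : 𝓞 K)
    (hac : algebraMap (𝓞 K) K a = 2)
    (hbc : algebraMap (𝓞 K) K b = 2 * sp)
    (hcc : algebraMap (𝓞 K) K c = ((p : K) + 1) / 2) :
    BinIndecCl a b c :=
  stmt7_general p q hp3 sp sq hsp hsq hgen a b c hac hbc hcc
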